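/- Let H be a symmetric n×n real matrix with Tr(H) = 0, and set p_H(x) = (xᵀHx)². Define p_{H,4}(x) = p_H(x) − ‖x‖² · (4/(4+n)) · xᵀH²x + ‖x‖⁴ · (2/((4+n)(2+n))) · Tr(H²), p_{H,2}(x) = (8/(8+2n))·xᵀH²x − ‖x‖²·(8/(n(8+2n)))·Tr(H²), and p_{H,0} = (2/(n(n+2)))·Tr(H²). Then p_H = p_{H,4} + ‖x‖² p_{H,2} + ‖x‖⁴ p_{H,0}, and p_{H,4}, p_{H,2}, p_{H,0} are harmonic. -/

import Mathlib

/-!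
Write `Q_M` for the polynomial `xᵀ M x`. Its gradient is `(M + Mᵀ) x`, so for symmetric `A`, `B`
the product rule `Δ(fg) = Δf g + f Δg + 2 ∇f·∇g` gives
`Δ(Q_A Q_B) = 2 tr A · Q_B + 2 tr B · Q_A + 8 Q_{AB}`. As `‖x‖² = Q_1`, this expresses the
Laplacians of `Q_H²`, `‖x‖² Q_{H²}` and `‖x‖⁴` through `Q_{H²}` and `‖x‖²` alone, and both the
decomposition and the harmonicity of its components reduce to identities between the rational
coefficients in `n`.
-/

open MvPolynomial Matrix

/-- The Laplacian of a multivariate polynomial. -/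
noncomputable def mvLaplacian {n : ℕ} (p : MvPolynomial (Fin n) ℝ) : MvPolynomial (Fin n) ℝ :=
  ∑ i, pderiv i (pderiv i p)

/-- The quadratic form `x ↦ xᵀ H x` as a polynomial. -/
noncomputable def quadFormPoly {n : ℕ} (H : Matrix (Fin n) (Fin n) ℝ) :
    MvPolynomial (Fin n) ℝ :=
  ∑ i, ∑ j, C (H i j) * (X i * X j)

/-- The polynomial `‖x‖² = ∑ i, x i ^ 2`. -/
noncomputable def normSqPoly (n : ℕ) : MvPolynomial (Fin n) ℝ := ∑ i, X i ^ 2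

/-- The degree-4 harmonic component of `(xᵀHx)²`. -/
noncomputable def pH4 {n : ℕ} (H : Matrix (Fin n) (Fin n) ℝ) : MvPolynomial (Fin n) ℝ :=
  quadFormPoly H ^ 2 - C (4 / (4 + (n : ℝ))) * (normSqPoly n * quadFormPoly (H * H))
    + C (2 / ((4 + (n : ℝ)) * (2 + (n : ℝ))) * Matrix.trace (H * H)) * normSqPoly n ^ 2

/-- The degree-2 harmonic component of `(xᵀHx)²`. -/
noncomputable def pH2 {n : ℕ} (H : Matrix (Fin n) (Fin n) ℝ) : MvPolynomial (Fin n) ℝ :=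
  C (8 / (8 + 2 * (n : ℝ))) * quadFormPoly (H * H)
    - C (8 / ((n : ℝ) * (8 + 2 * (n : ℝ))) * Matrix.trace (H * H)) * normSqPoly n

/-- The degree-0 harmonic component of `(xᵀHx)²`. -/
noncomputable def pH0 {n : ℕ} (H : Matrix (Fin n) (Fin n) ℝ) : MvPolynomial (Fin n) ℝ :=
  C (2 / ((n : ℝ) * ((n : ℝ) + 2)) * Matrix.trace (H * H))

section
variable {n : ℕ}

noncomputable def linFormPoly (v : Fin n → ℝ) : MvPolynomial (Fin n) ℝ := ∑ j, C (v j) * X j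

lemma linFormPoly_add (v w : Fin n → ℝ) :
    linFormPoly (v + w) = linFormPoly v + linFormPoly w := by
  simp only [linFormPoly, Pi.add_apply, C_add, add_mul, Finset.sum_add_distrib]

lemma pderiv_linFormPoly (v : Fin n → ℝ) (k : Fin n) : pderiv k (linFormPoly v) = C (v k) := by
  classical
  simp [linFormPoly, pderiv_X, Pi.single_apply]

lemma quadFormPoly_eq_sum_X_mul_linFormPoly (M : Matrix (Fin n) (Fin n) ℝ) :
    quadFormPoly M = ∑ i, X i * linFormPoly (M i) := by
  simp only [quadFormPoly, linFormPoly, Finset.mul_sum]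
  exact Finset.sum_congr rfl fun i _ => Finset.sum_congr rfl fun j _ => by ring

lemma sum_linFormPoly_mul_linFormPoly (A B : Matrix (Fin n) (Fin n) ℝ) :
    ∑ k, linFormPoly (A k) * linFormPoly (B k) = quadFormPoly (Aᵀ * B) :=
  calc ∑ k, linFormPoly (A k) * linFormPoly (B k)
      = ∑ k, ∑ i, ∑ j, C (A k i) * C (B k j) * (X i * X j) := by
        simp only [linFormPoly, Finset.sum_mul_sum]
        exact Finset.sum_congr rfl fun k _ => Finset.sum_congr rfl fun i _ =>
          Finset.sum_congr rfl fun j _ => by ring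
    _ = ∑ i, ∑ j, ∑ k, C (A k i) * C (B k j) * (X i * X j) := by
        rw [Finset.sum_comm]
        exact Finset.sum_congr rfl fun i _ => Finset.sum_comm
    _ = quadFormPoly (Aᵀ * B) := by
        simp only [quadFormPoly, Matrix.mul_apply, Matrix.transpose_apply, map_sum, C_mul,
          Finset.sum_mul]

lemma quadFormPoly_add (A B : Matrix (Fin n) (Fin n) ℝ) :
    quadFormPoly (A + B) = quadFormPoly A + quadFormPoly B := by
  simp only [quadFormPoly, Matrix.add_apply, C_add, add_mul, Finset.sum_add_distrib]

lemma normSqPoly_eq_quadFormPoly_one : normSqPoly n = quadFormPoly 1 := by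
  classical
  simp [normSqPoly, quadFormPoly, Matrix.one_apply, sq]

lemma pderiv_quadFormPoly (M : Matrix (Fin n) (Fin n) ℝ) (k : Fin n) :
    pderiv k (quadFormPoly M) = linFormPoly ((M + Mᵀ) k) := by
  classical
  rw [quadFormPoly_eq_sum_X_mul_linFormPoly, map_sum]
  simp only [Derivation.leibniz, pderiv_linFormPoly, smul_eq_mul, pderiv_X, Pi.single_apply,
    mul_ite, mul_one, mul_zero, Finset.sum_add_distrib, Finset.sum_ite_eq', Finset.mem_univ,
    ↓reduceIte]
  rw [show (M + Mᵀ) k = M k + Mᵀ k from rfl, linFormPoly_add, add_comm]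
  simp [linFormPoly, mul_comm]

lemma sum_pderiv_quadFormPoly_mul_pderiv_quadFormPoly (A B : Matrix (Fin n) (Fin n) ℝ) :
    ∑ i, pderiv i (quadFormPoly A) * pderiv i (quadFormPoly B)
      = quadFormPoly ((A + Aᵀ)ᵀ * (B + Bᵀ)) := by
  simp only [pderiv_quadFormPoly, sum_linFormPoly_mul_linFormPoly]

lemma mvLaplacian_add (p q : MvPolynomial (Fin n) ℝ) :
    mvLaplacian (p + q) = mvLaplacian p + mvLaplacian q := by
  simp only [mvLaplacian, map_add, Finset.sum_add_distrib]

lemma mvLaplacian_sub (p q : MvPolynomial (Fin n) ℝ) :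
    mvLaplacian (p - q) = mvLaplacian p - mvLaplacian q := by
  simp only [mvLaplacian, map_sub, Finset.sum_sub_distrib]

lemma mvLaplacian_smul (c : ℝ) (p : MvPolynomial (Fin n) ℝ) :
    mvLaplacian (c • p) = c • mvLaplacian p := by
  simp only [mvLaplacian, Derivation.map_smul, Finset.smul_sum]

lemma mvLaplacian_C (a : ℝ) : mvLaplacian (C a : MvPolynomial (Fin n) ℝ) = 0 := by
  simp [mvLaplacian]

lemma mvLaplacian_mul (p q : MvPolynomial (Fin n) ℝ) :
    mvLaplacian (p * q) = mvLaplacian p * q + p * mvLaplacian q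
      + 2 * ∑ i, pderiv i p * pderiv i q := by
  simp only [mvLaplacian, Finset.mul_sum, Finset.sum_mul, ← Finset.sum_add_distrib]
  refine Finset.sum_congr rfl fun i _ => ?_
  simp only [Derivation.leibniz, map_add, smul_eq_mul]
  ring

lemma mvLaplacian_quadFormPoly (M : Matrix (Fin n) (Fin n) ℝ) :
    mvLaplacian (quadFormPoly M) = C (trace (M + Mᵀ)) := by
  simp only [mvLaplacian, pderiv_quadFormPoly, pderiv_linFormPoly, Matrix.trace, map_sum]
  rfl

lemma mvLaplacian_quadFormPoly_of_isSymm {M : Matrix (Fin n) (Fin n) ℝ} (hM : M.IsSymm) :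
    mvLaplacian (quadFormPoly M) = C (2 * trace M) := by
  rw [mvLaplacian_quadFormPoly, hM.eq, trace_add, two_mul]

lemma mvLaplacian_normSqPoly : mvLaplacian (normSqPoly n) = C (2 * n : ℝ) := by
  rw [normSqPoly_eq_quadFormPoly_one, mvLaplacian_quadFormPoly_of_isSymm isSymm_one, trace_one,
    Fintype.card_fin]

lemma mvLaplacian_quadFormPoly_mul_quadFormPoly {A B : Matrix (Fin n) (Fin n) ℝ}
    (hA : A.IsSymm) (hB : B.IsSymm) :
    mvLaplacian (quadFormPoly A * quadFormPoly B) = (2 * trace A) • quadFormPoly B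
      + (2 * trace B) • quadFormPoly A + (8 : ℝ) • quadFormPoly (A * B) := by
  rw [mvLaplacian_mul, mvLaplacian_quadFormPoly_of_isSymm hA, mvLaplacian_quadFormPoly_of_isSymm hB,
    sum_pderiv_quadFormPoly_mul_pderiv_quadFormPoly, hA.eq, hB.eq]
  simp only [transpose_add, hA.eq, add_mul, mul_add, quadFormPoly_add, mul_comm (quadFormPoly A), C_mul', two_mul]
  module

lemma mvLaplacian_quadFormPoly_sq {H : Matrix (Fin n) (Fin n) ℝ} (hH : H.IsSymm)
    (htr : trace H = 0) : mvLaplacian (quadFormPoly H ^ 2) = (8 : ℝ) • quadFormPoly (H * H) := by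
  rw [sq, mvLaplacian_quadFormPoly_mul_quadFormPoly hH hH, htr]
  module

lemma mvLaplacian_normSqPoly_mul_quadFormPoly {M : Matrix (Fin n) (Fin n) ℝ} (hM : M.IsSymm) :
    mvLaplacian (normSqPoly n * quadFormPoly M)
      = (2 * n + 8 : ℝ) • quadFormPoly M + (2 * trace M) • normSqPoly n := by
  rw [normSqPoly_eq_quadFormPoly_one, mvLaplacian_quadFormPoly_mul_quadFormPoly isSymm_one hM,
    trace_one, Fintype.card_fin, Matrix.one_mul]
  module

lemma mvLaplacian_normSqPoly_sq :
    mvLaplacian (normSqPoly n ^ 2) = (4 * n + 8 : ℝ) • normSqPoly n := by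
  rw [sq, normSqPoly_eq_quadFormPoly_one, mvLaplacian_quadFormPoly_mul_quadFormPoly isSymm_one isSymm_one,
    trace_one, Fintype.card_fin, Matrix.one_mul]
  module

end

theorem harmonic_decomposition_quadform_sq {n : ℕ} (hn : 0 < n)
    (H : Matrix (Fin n) (Fin n) ℝ) (hH : Hᵀ = H) (htr : Matrix.trace H = 0) :
    quadFormPoly H ^ 2 = pH4 H + normSqPoly n * pH2 H + normSqPoly n ^ 2 * pH0 H ∧
    mvLaplacian (pH4 H) = 0 ∧ mvLaplacian (pH2 H) = 0 ∧ mvLaplacian (pH0 H) = 0 := by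
  have hn0 : (n : ℝ) ≠ 0 := by positivity
  have hHH : (H * H).IsSymm := by rw [← sq]; exact IsSymm.pow hH 2
  set t := trace (H * H)
  refine ⟨?_, ?_, ?_, mvLaplacian_C _⟩
  · have hQ : (8 : ℝ) / (8 + 2 * n) - 4 / (4 + n) = 0 := by field_simp; ring
    have hN : 2 / ((4 + n) * (2 + n)) * t - 8 / (n * (8 + 2 * n)) * t + 2 / (n * (n + 2)) * t = 0 := by
      field_simp; ring
    rw [pH4, pH2, pH0, mul_comm (normSqPoly n ^ 2)]
    simp only [C_mul', mul_sub, mul_smul_comm]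
    rw [← sq (normSqPoly n)]
    linear_combination (norm := module)
      -(hQ • (normSqPoly n * quadFormPoly (H * H)) + hN • normSqPoly n ^ 2)
  · have hQ : (8 : ℝ) - 4 / (4 + n) * (2 * n + 8) = 0 := by field_simp; ring
    have hN : 2 / ((4 + n) * (2 + n)) * t * (4 * n + 8) - 4 / (4 + n) * (2 * t) = 0 := by
      field_simp; ring
    simp only [pH4, C_mul', mvLaplacian_add, mvLaplacian_sub, mvLaplacian_smul,
      mvLaplacian_quadFormPoly_sq hH htr, mvLaplacian_normSqPoly_mul_quadFormPoly hHH,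
      mvLaplacian_normSqPoly_sq]
    linear_combination (norm := module) hQ • quadFormPoly (H * H) + hN • normSqPoly n
  · have h : 8 / (8 + 2 * n) * (2 * t) - 8 / (n * (8 + 2 * n)) * t * (2 * n) = 0 := by
      field_simp; ring
    simp only [pH2, C_mul', mvLaplacian_sub, mvLaplacian_smul,
      mvLaplacian_quadFormPoly_of_isSymm hHH, mvLaplacian_normSqPoly]
    simp only [C_eq_smul_one (σ := Fin n)]
    linear_combination (norm := module) h • (1 : MvPolynomial (Fin n) ℝ)
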